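/- arXiv:2109.00735 — 7 statements merged into one kernel-verified Lean document; each statement's English description precedes it below -/
import Mathlib

section
/- Let R be a finite Frobenius ring and let a, b be units in R. Then the quaternion ring H_{a,b}(R) is also a Frobenius ring. -/
/-!
The generating character of `H_{a,b}(R)` is `χ ∘ re`. If a left ideal `I` lies in its kernel,
then for `x ∈ I` the ideal `R · re x = re (R · x)` lies in `ker χ`, so `re` vanishes on `I`;
as `I` is a left ideal, `re (y * x) = 0` for every `y`. For `y = 1, i, j, k` these values are
`x.re`, `a x.imI`, `b x.imJ`, `-a b x.imK`, so `x = 0` because `a` and `b` are units.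
-/

open scoped Quaternion

/-- A finite ring is Frobenius if it admits a generating character: an additive
character into the circle group whose kernel contains no nonzero left ideals. -/
def IsFrobeniusRing (R : Type) [Ring R] : Prop :=
  ∃ χ : AddChar R Circle, ∀ I : Ideal R, (∀ x ∈ I, χ x = 1) → I = ⊥

def AddChar.IsGenerating {R M : Type*} [Ring R] [Monoid M] (χ : AddChar R M) : Prop :=
  ∀ I : Ideal R, (∀ x ∈ I, χ x = 1) → I = ⊥

theorem AddChar.IsGenerating.compAddMonoidHom_linearMap {R A M : Type*} [CommRing R] [Ring A]
    [Algebra R A] [Monoid M] {χ : AddChar R M} (hχ : χ.IsGenerating) (f : A →ₗ[R] R)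
    (hf : ∀ x : A, (∀ y, f (y * x) = 0) → x = 0) :
    (χ.compAddMonoidHom f.toAddMonoidHom).IsGenerating := by
  intro I hI
  have hfI : ∀ x ∈ I, f x = 0 := by
    intro x hx
    have hspan : Ideal.span {f x} = ⊥ := by
      refine hχ _ fun z hz => ?_
      obtain ⟨r, rfl⟩ := Ideal.mem_span_singleton'.mp hz
      have hrx : r • x ∈ I := by
        rw [Algebra.smul_def]
        exact I.mul_mem_left _ hx
      simpa only [compAddMonoidHom_apply, LinearMap.toAddMonoidHom_coe, f.map_smul,
        smul_eq_mul] using hI _ hrx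
    exact Ideal.span_singleton_eq_bot.mp hspan
  rw [eq_bot_iff]
  intro x hx
  exact hf x fun y => hfI _ (I.mul_mem_left y hx)

namespace QuaternionAlgebra

theorem eq_zero_of_forall_re_mul_eq_zero {R : Type*} [CommRing R] {c₁ c₂ c₃ : R}
    (h₁ : IsUnit c₁) (h₃ : IsUnit c₃) {x : ℍ[R,c₁,c₂,c₃]}
    (hx : ∀ y : ℍ[R,c₁,c₂,c₃], (y * x).re = 0) : x = 0 := by
  have hre : x.re = 0 := by simpa only [one_mul] using hx 1
  have hi := hx ⟨0, 1, 0, 0⟩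
  have hj := hx ⟨0, 0, 1, 0⟩
  have hk := hx ⟨0, 0, 0, 1⟩
  simp only [re_mul, zero_mul, mul_zero, mul_one, zero_add, add_zero, sub_zero, zero_sub]
    at hi hj hk
  have hI : x.imI = 0 := h₁.mul_right_eq_zero.mp hi
  have hK : x.imK = 0 := (h₁.mul h₃).mul_right_eq_zero.mp (neg_eq_zero.mp hk)
  have hJ : x.imJ = 0 := h₃.mul_right_eq_zero.mp (by simpa [hK] using hj)
  ext <;> simp [hre, hI, hJ, hK]

end QuaternionAlgebra

theorem quaternion_isFrobeniusRing_general (R : Type) [CommRing R] (a b : Rˣ)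
    (hR : IsFrobeniusRing R) :
    IsFrobeniusRing ℍ[R, (a : R), (b : R)] := by
  obtain ⟨χ, hχ⟩ := hR
  exact ⟨_, AddChar.IsGenerating.compAddMonoidHom_linearMap (χ := χ) hχ
    (QuaternionAlgebra.reₗ _ _ _) fun _ hx =>
      QuaternionAlgebra.eq_zero_of_forall_re_mul_eq_zero a.isUnit b.isUnit hx⟩

/-- If `R` is a finite Frobenius ring and `a, b` are units of `R`, then the
quaternion ring `H_{a,b}(R)` is also a Frobenius ring. -/
theorem quaternion_isFrobeniusRing (R : Type) [CommRing R] [Fintype R] (a b : Rˣ)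
    (hR : IsFrobeniusRing R) :
    IsFrobeniusRing ℍ[R, (a : R), (b : R)] :=
  quaternion_isFrobeniusRing_general R a b hR
end

section
/- Let q be an odd prime power. Then the quaternion ring H(F_q), isomorphic to M_2(F_q), has exactly q^2 + q + 2 idempotent elements. -/
/-!
Every quaternion satisfies `x ^ 2 = 2 re(x) x - N(x)`. Hence an idempotent is either a scalar
idempotent `0`, `1`, or has `re x = 1/2` and `N(x) = 0`, i.e. its imaginary part `(b, c, d)` lies
on the sphere `b² + c² + d² = -1/4`. Summing the quadratic character `χ` over fibres, a sphere
`b² + c² + d² = t` over `F_q` (`q` odd) has `q² + χ(-t) q` points, and `-(-1/4)` is a square.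
-/

open scoped Quaternion
open Finset

theorem Finset.card_filter_prod_eq_sum {α β : Type*} [Fintype α] [Fintype β] (P : α × β → Prop)
    [DecidablePred P] :
    #{p | P p} = ∑ a, #{b | P (a, b)} := by
  simp only [Finset.card_filter, Fintype.sum_prod_type]

namespace FiniteField

variable {F : Type*} [Field F] [Fintype F] [DecidableEq F]

theorem card_mul_eq {c : F} (hc : c ≠ 0) : #{p : F × F | p.1 * p.2 = c} = Fintype.card F - 1 := by
  have fiber (u : F) : #{v | u * v = c} = if u = 0 then 0 else 1 := by
    split_ifs with hu
    · simp [hu, hc.symm]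
    · rw [card_eq_one]
      exact ⟨u⁻¹ * c, by ext v; simp [eq_inv_mul_iff_mul_eq₀ hu]⟩
  simp only [card_filter_prod_eq_sum, fiber, sum_ite, sum_const_zero, sum_const, smul_eq_mul,
    mul_one, zero_add, filter_ne', card_erase_of_mem (mem_univ _), card_univ]

theorem card_sq_eq_sq_add (hF : ringChar F ≠ 2) {c : F} (hc : c ≠ 0) :
    #{p : F × F | p.2 ^ 2 = p.1 ^ 2 + c} = Fintype.card F - 1 := by
  have h2 : (2 : F) ≠ 0 := Ring.two_ne_zero hF
  let e : F × F ≃ F × F :=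
    { toFun p := (p.2 - p.1, p.2 + p.1)
      invFun p := ((p.2 - p.1) / 2, (p.1 + p.2) / 2)
      left_inv p := by ext <;> field_simp <;> ring
      right_inv p := by ext <;> field_simp <;> ring }
  rw [← card_mul_eq hc]
  refine card_equiv e fun p => ?_
  simp only [mem_filter, mem_univ, true_and, e, Equiv.coe_fn_mk]
  constructor <;> intro h <;> linear_combination h

theorem sum_quadraticChar_sq_add (hF : ringChar F ≠ 2) (c : F) :
    ∑ y : F, quadraticChar F (y ^ 2 + c) = if c = 0 then (Fintype.card F : ℤ) - 1 else -1 := by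
  split_ifs with hc
  · have hsq (y : F) (hy : y ∈ univ.erase 0) : quadraticChar F (y ^ 2 + c) = 1 := by
      rw [hc, add_zero, quadraticChar_sq_one' (ne_of_mem_erase hy)]
    rw [← sum_erase_add _ _ (mem_univ 0), sum_congr rfl hsq, sum_const,
      card_erase_of_mem (mem_univ _), card_univ, hc]
    simp [Nat.cast_sub Fintype.card_pos]
  · have hcount : ∑ y : F, (quadraticChar F (y ^ 2 + c) + 1) = (Fintype.card F : ℤ) - 1 := by
      have hfiber (y : F) : quadraticChar F (y ^ 2 + c) + 1 = #{z | z ^ 2 = y ^ 2 + c} := by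
        rw [← quadraticChar_card_sqrts hF, Set.toFinset_ofPred]
      have hprod : #{p : F × F | p.2 ^ 2 = p.1 ^ 2 + c} = ∑ y, #{z | z ^ 2 = y ^ 2 + c} :=
        card_filter_prod_eq_sum _
      simp_rw [hfiber, ← Nat.cast_sum, ← hprod, card_sq_eq_sq_add hF hc,
        Nat.cast_sub Fintype.card_pos, Nat.cast_one]
    rw [sum_add_distrib, sum_const, card_univ, nsmul_one] at hcount
    linarith

theorem card_sum_three_sq_eq (hF : ringChar F ≠ 2) (t : F) :
    (#{v : F × F × F | v.1 ^ 2 + v.2.1 ^ 2 + v.2.2 ^ 2 = t} : ℤ)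
      = Fintype.card F ^ 2 + quadraticChar F (-t) * Fintype.card F := by
  set q : ℤ := (Fintype.card F : ℤ)
  have hfiber (x y : F) : (#{z | x ^ 2 + y ^ 2 + z ^ 2 = t} : ℤ)
      = quadraticChar F (-1) * quadraticChar F (y ^ 2 + (x ^ 2 - t)) + 1 := by
    rw [← map_mul, ← quadraticChar_card_sqrts hF, Set.toFinset_ofPred]
    congr 2
    exact filter_congr fun z _ =>
      ⟨fun h => by linear_combination h, fun h => by linear_combination h⟩
  have hline (x : F) : ∑ y, (quadraticChar F (-1) * quadraticChar F (y ^ 2 + (x ^ 2 - t)) + 1)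
      = quadraticChar F (-1) * ((if x ^ 2 = t then 1 else 0) * q - 1) + q := by
    rw [sum_add_distrib, ← mul_sum, sum_quadraticChar_sq_add hF, sum_const, card_univ, nsmul_one]
    simp only [sub_eq_zero]
    split_ifs <;> ring
  have hroots : ∑ x : F, (if x ^ 2 = t then (1 : ℤ) else 0) = quadraticChar F t + 1 := by
    rw [sum_boole, ← quadraticChar_card_sqrts hF, Set.toFinset_ofPred]
  calc (#{v : F × F × F | v.1 ^ 2 + v.2.1 ^ 2 + v.2.2 ^ 2 = t} : ℤ)
      = ∑ x, ∑ y, (#{z | x ^ 2 + y ^ 2 + z ^ 2 = t} : ℤ) := by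
        simp only [card_filter_prod_eq_sum, Nat.cast_sum]
    _ = ∑ x : F, (quadraticChar F (-1) * ((if x ^ 2 = t then 1 else 0) * q - 1) + q) := by
        simp only [hfiber, hline]
    _ = q ^ 2 + quadraticChar F (-t) * q := by
        rw [sum_add_distrib, ← mul_sum, sum_sub_distrib, ← sum_mul, hroots, sum_const, sum_const,
          card_univ, neg_eq_neg_one_mul t, map_mul]
        simp only [nsmul_one]
        ring

end FiniteField

namespace Quaternion

variable {K : Type*} [Field K]

theorem sq_eq_re_mul_sub_normSq (x : ℍ[K]) : x ^ 2 = ↑(2 * x.re) * x - ↑(normSq x) := by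
  rw [← self_mul_star, star_eq_two_re_sub, mul_sub, coe_commutes, sq]
  abel

theorem isIdempotentElem_iff (h2 : (2 : K) ≠ 0) {x : ℍ[K]} :
    IsIdempotentElem x ↔ x = 0 ∨ x = 1 ∨ (x.re = 2⁻¹ ∧ normSq x = 0) := by
  have hsq := sq_eq_re_mul_sub_normSq x
  constructor
  · intro hx
    have hlin : ↑(2 * x.re - 1) * x = ↑(normSq x) := by
      have hfix : ↑(2 * x.re) * x = x + ↑(normSq x) := by
        rw [← sub_eq_iff_eq_add, ← hsq, sq, hx.eq]
      rw [coe_sub, coe_one, sub_mul, one_mul, hfix]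
      abel
    by_cases hre : 2 * x.re - 1 = 0
    · refine Or.inr (Or.inr ⟨eq_inv_of_mul_eq_one_right (by linear_combination hre),
        coe_injective ?_⟩)
      rw [← hlin, hre, coe_zero, zero_mul]
    · have hx_coe : x = ↑(normSq x / (2 * x.re - 1)) := by
        rw [div_eq_inv_mul, coe_mul, ← hlin, ← mul_assoc, ← coe_mul, inv_mul_cancel₀ hre, coe_one,
          one_mul]
      have hr : IsIdempotentElem (normSq x / (2 * x.re - 1)) :=
        coe_injective (by rw [coe_mul, ← hx_coe, hx.eq])
      rcases IsIdempotentElem.iff_eq_zero_or_one.mp hr with h | h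
      · exact Or.inl (by rw [hx_coe, h, coe_zero])
      · exact Or.inr (Or.inl (by rw [hx_coe, h, coe_one]))
  · rintro (rfl | rfl | ⟨hre, hnorm⟩)
    · exact IsIdempotentElem.zero
    · exact IsIdempotentElem.one
    · rw [IsIdempotentElem, ← sq, hsq, hre, hnorm, mul_inv_cancel₀ h2, coe_one, one_mul, coe_zero,
        sub_zero]

theorem card_isIdempotentElem [Finite K] (h2 : (2 : K) ≠ 0) :
    Nat.card {x : ℍ[K] // IsIdempotentElem x}
      = Nat.card {x : ℍ[K] // x.re = 2⁻¹ ∧ normSq x = 0} + 2 := by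
  have : Finite ℍ[K] := Module.finite_of_finite K
  set S : Set ℍ[K] := {x | x.re = 2⁻¹ ∧ normSq x = 0}
  have zero_notMem : (0 : ℍ[K]) ∉ S := fun h => inv_ne_zero h2 h.1.symm
  have one_notMem : (1 : ℍ[K]) ∉ S :=
    fun h => h2 (by linear_combination 2 * inv_eq_one.mp h.1.symm)
  rw [Nat.card_congr (Equiv.subtypeEquivRight fun x => isIdempotentElem_iff h2)]
  change (insert 0 (insert 1 S)).ncard = S.ncard + 2
  rw [Set.ncard_insert_of_notMem (by simp [zero_notMem]), Set.ncard_insert_of_notMem one_notMem]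

theorem card_re_eq_normSq_eq {R : Type*} [CommRing R] (a n : R) :
    Nat.card {x : ℍ[R] // x.re = a ∧ normSq x = n}
      = Nat.card {v : R × R × R // v.1 ^ 2 + v.2.1 ^ 2 + v.2.2 ^ 2 = n - a ^ 2} :=
  Nat.card_congr
    { toFun x := ⟨(x.1.imI, x.1.imJ, x.1.imK), by
        have h := normSq_def' x.1
        rw [x.2.1, x.2.2] at h
        linear_combination -h⟩
      invFun v := ⟨(⟨a, v.1.1, v.1.2.1, v.1.2.2⟩ : ℍ[R]), rfl, by
        refine (normSq_def' _).trans ?_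
        linear_combination v.2⟩
      left_inv x := by
        obtain ⟨⟨r, i, j, k⟩, hr, -⟩ := x
        subst hr
        rfl
      right_inv v := rfl }

end Quaternion

/-- For an odd prime power `q`, the quaternion ring `H(F_q)` (isomorphic to
`M₂(F_q)`) has exactly `q^2 + q + 2` idempotent elements. -/
theorem quaternion_card_idempotents (q : ℕ) (hq : Odd q)
    (F : Type) [Field F] [Fintype F] (hF : Fintype.card F = q) :
    Nat.card {x : ℍ[F] // IsIdempotentElem x} = q ^ 2 + q + 2 := by
  classical
  have hF2 : ringChar F ≠ 2 := fun h => by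
    have := FiniteField.even_card_of_char_two h
    rw [hF] at this
    exact Nat.not_even_iff_odd.mpr hq (Nat.even_iff.mpr this)
  have h2 : (2 : F) ≠ 0 := Ring.two_ne_zero hF2
  have hsphere := FiniteField.card_sum_three_sq_eq hF2 (0 - 2⁻¹ ^ 2)
  rw [neg_sub, sub_zero, quadraticChar_sq_one' (inv_ne_zero h2), hF, one_mul] at hsphere
  rw [Quaternion.card_isIdempotentElem h2, Quaternion.card_re_eq_normSq_eq,
    Nat.card_eq_fintype_card, Fintype.card_subtype]
  zify
  linarith
end

section
/- Let R be a finite Frobenius ring with a unique minimal left ideal I. Then any homogeneous weight w on R with average value Gamma satisfies: w(0)=0, w(x) = Gamma * |I|/(|I|-1) for all nonzero x in I, and w(x) = Gamma for all x not in I. -/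
open scoped Quaternion

/-- The average of a weight `w` over an ideal `I` of `R`. -/
noncomputable def idealAvg {R : Type} [Ring R] (w : R → ℝ) (I : Ideal R) : ℝ :=
  (∑ᶠ y ∈ (I : Set R), w y) / (Nat.card I)

/-- `w` is a left homogeneous weight on `R` with average value `Γ`:
`w 0 = 0`, `w` is constant on generators of equal principal left ideals, and the
average of `w` over every nonzero principal left ideal equals `Γ`. -/
def IsLeftHomogeneousWeight {R : Type} [Ring R] (w : R → ℝ) (Γ : ℝ) : Prop :=
  w 0 = 0 ∧ (∀ x y : R, Ideal.span {x} = Ideal.span {y} → w x = w y) ∧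
    ∀ x : R, x ≠ 0 → idealAvg w (Ideal.span {x}) = Γ

/-!
Every nonzero left ideal contains a minimal one, so the unique minimal left ideal `I` is the least
nonzero left ideal. Its nonzero elements all generate `I`, so `w` is constant on `I \ {0}` and the
average condition on `I` determines that constant. Off `I`, compare `w` with the weight that agrees
with `w` on `I` and equals `Γ` elsewhere: both are constant on generators of the same principal
left ideal and have the same sums over all principal left ideals (each principal ideal not inside
`I` contains `I`). Such a function is determined by these sums, by induction over the principal
left ideals: the sum over `Rx` is the value at `x` times the number of generators of `Rx`, plus
sums over strictly smaller principal ideals.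
-/

open Set

theorem finsum_mem_eq_ncard_nsmul {α M : Type*} [AddCommMonoid M] {s : Set α} (hs : s.Finite)
    {f : α → M} {c : M} (h : ∀ x ∈ s, f x = c) : ∑ᶠ x ∈ s, f x = s.ncard • c := by
  rw [finsum_mem_congr rfl h, finsum_mem_eq_finite_toFinset_sum _ hs, Finset.sum_const,
    ncard_eq_toFinset_card s hs]

theorem le_of_forall_isAtom_eq {α : Type*} [PartialOrder α] [OrderBot α] [IsAtomic α] {a b : α}
    (ha : ∀ c, IsAtom c → c = a) (hb : b ≠ ⊥) : a ≤ b := by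
  obtain ⟨c, hc, hcb⟩ := (eq_bot_or_exists_atom_le b).resolve_left hb
  exact ha c hc ▸ hcb

namespace Ideal

variable {R : Type*} [Semiring R]

theorem eq_of_finsum_span_singleton_eq [Finite R] {M : Type*} [AddCancelCommMonoid M]
    [IsAddTorsionFree M] {f g : R → M}
    (hf : ∀ x y : R, span {x} = span {y} → f x = f y)
    (hg : ∀ x y : R, span {x} = span {y} → g x = g y)
    (h : ∀ x : R, ∑ᶠ y ∈ (span {x} : Set R), f y = ∑ᶠ y ∈ (span {x} : Set R), g y) :
    f = g := by
  suffices ∀ J : Ideal R, ∀ x, span {x} = J → f x = g x from funext fun x => this _ x rfl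
  intro J
  induction J using WellFoundedLT.induction with
  | _ J ih =>
    rintro x rfl
    set S : Set R := ((span {x} : Ideal R) : Set R)
    set gens : Set R := {y | span {y} = span {x}}
    have hfin : S.Finite := toFinite _
    have hsmaller : ∑ᶠ y ∈ S \ gens, f y = ∑ᶠ y ∈ S \ gens, g y :=
      finsum_mem_congr rfl fun y ⟨hy, hgen⟩ =>
        ih _ (lt_of_le_of_ne ((span_singleton_le_iff_mem _).mpr hy) hgen) y rfl
    have hgens_f : ∑ᶠ y ∈ S ∩ gens, f y = (S ∩ gens).ncard • f x :=
      finsum_mem_eq_ncard_nsmul (hfin.inter_of_left _) fun y hy => hf y x hy.2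
    have hgens_g : ∑ᶠ y ∈ S ∩ gens, g y = (S ∩ gens).ncard • g x :=
      finsum_mem_eq_ncard_nsmul (hfin.inter_of_left _) fun y hy => hg y x hy.2
    have hgens := h x
    rw [← finsum_mem_inter_add_sdiff gens hfin, ← finsum_mem_inter_add_sdiff gens hfin,
      hsmaller, hgens_f, hgens_g] at hgens
    have hx : x ∈ S ∩ gens := ⟨mem_span_singleton_self x, rfl⟩
    exact nsmul_right_injective ((ncard_pos (hfin.inter_of_left _)).mpr ⟨x, hx⟩).ne'
      (add_right_cancel hgens)

theorem span_singleton_eq_of_isLeast {I : Ideal R} (hI : IsLeast {J : Ideal R | J ≠ ⊥} I)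
    {x : R} (hx : x ∈ I) (hx0 : x ≠ 0) : span {x} = I :=
  le_antisymm ((span_singleton_le_iff_mem I).mpr hx) (hI.2 (mt span_singleton_eq_bot.mp hx0))

end Ideal

namespace IsLeftHomogeneousWeight

open Ideal

variable {R : Type} [Ring R] [Finite R] {w : R → ℝ} {Γ : ℝ}

theorem finsum_span_singleton (hw : IsLeftHomogeneousWeight w Γ) {x : R} (hx : x ≠ 0) :
    ∑ᶠ y ∈ (span {x} : Set R), w y = Γ * (span {x} : Set R).ncard := by
  have hpos : (0 : ℝ) < (span {x} : Set R).ncard :=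
    Nat.cast_pos.mpr ((ncard_pos (toFinite _)).mpr ⟨0, zero_mem _⟩)
  have havg := hw.2.2 x hx
  rw [idealAvg, show Nat.card (span {x}) = (span {x} : Set R).ncard from Nat.card_coe_set_eq _,
    div_eq_iff hpos.ne'] at havg
  exact havg

theorem finsum_of_isLeast (hw : IsLeftHomogeneousWeight w Γ) {I : Ideal R}
    (hI : IsLeast {J : Ideal R | J ≠ ⊥} I) :
    ∑ᶠ y ∈ (I : Set R), w y = Γ * (I : Set R).ncard := by
  obtain ⟨x, hx, hx0⟩ := Submodule.exists_mem_ne_zero_of_ne_bot hI.1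
  rw [← span_singleton_eq_of_isLeast hI hx hx0]
  exact hw.finsum_span_singleton hx0

theorem apply_of_mem_of_isLeast (hw : IsLeftHomogeneousWeight w Γ) {I : Ideal R}
    (hI : IsLeast {J : Ideal R | J ≠ ⊥} I) {x : R} (hx : x ∈ I) (hx0 : x ≠ 0) :
    w x = Γ * (Nat.card I : ℝ) / ((Nat.card I : ℝ) - 1) := by
  have hfin : (I : Set R).Finite := toFinite _
  have hconst : ∀ y ∈ (I : Set R) \ {0}, w y = w x := fun y ⟨hy, hy0⟩ =>
    hw.2.1 y x ((span_singleton_eq_of_isLeast hI hy hy0).trans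
      (span_singleton_eq_of_isLeast hI hx hx0).symm)
  have hsum := hw.finsum_of_isLeast hI
  rw [← finsum_mem_add_sdiff (singleton_subset_iff.mpr I.zero_mem) hfin, finsum_mem_singleton,
    hw.1, zero_add, finsum_mem_eq_ncard_nsmul hfin.sdiff hconst, nsmul_eq_mul,
    ← ncard_sdiff_singleton_add_one I.zero_mem hfin] at hsum
  have hpos : (0 : ℝ) < ((I : Set R) \ {0}).ncard :=
    Nat.cast_pos.mpr ((ncard_pos hfin.sdiff).mpr ⟨x, hx, hx0⟩)
  rw [show Nat.card I = (I : Set R).ncard from Nat.card_coe_set_eq _,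
    ← ncard_sdiff_singleton_add_one I.zero_mem hfin]
  push_cast at hsum ⊢
  rw [add_sub_cancel_right, eq_div_iff hpos.ne']
  linarith

theorem apply_of_notMem_of_isLeast (hw : IsLeftHomogeneousWeight w Γ) {I : Ideal R}
    (hI : IsLeast {J : Ideal R | J ≠ ⊥} I) {x : R} (hx : x ∉ I) : w x = Γ := by
  classical
  let v : R → ℝ := fun y => if y ∈ I then w y else Γ
  have hmem_iff {y z : R} (h : span {y} = span {z}) : y ∈ I ↔ z ∈ I := by
    rw [← span_singleton_le_iff_mem, h, span_singleton_le_iff_mem]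
  have hv : ∀ y z : R, span {y} = span {z} → v y = v z := fun y z h => by
    simp only [v, hmem_iff h, hw.2.1 y z h]
  have hsum (z : R) :
      ∑ᶠ y ∈ (span {z} : Set R), w y = ∑ᶠ y ∈ (span {z} : Set R), v y := by
    by_cases hz : z ∈ I
    · exact finsum_mem_congr rfl fun y hy =>
        (if_pos ((span_singleton_le_iff_mem I).mpr hz hy) : v y = w y).symm
    have hz0 : z ≠ 0 := fun h => hz (h ▸ I.zero_mem)
    have hIz : (I : Set R) ⊆ span {z} := hI.2 (mt span_singleton_eq_bot.mp hz0)
    have hfin : (span {z} : Set R).Finite := toFinite _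
    rw [hw.finsum_span_singleton hz0, ← finsum_mem_add_sdiff hIz hfin,
      finsum_mem_congr rfl fun y (hy : y ∈ I) => (if_pos hy : v y = w y),
      hw.finsum_of_isLeast hI,
      finsum_mem_eq_ncard_nsmul (f := v) hfin.sdiff fun y hy => if_neg hy.2, nsmul_eq_mul,
      ← ncard_sdiff_add_ncard_of_subset hIz hfin]
    push_cast
    ring
  rw [eq_of_finsum_span_singleton_eq hw.2.1 hv hsum]
  exact if_neg hx

end IsLeftHomogeneousWeight

theorem homWeight_of_unique_minimal_ideal_general (R : Type) [Ring R] [Fintype R]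
    (I : Ideal R) (hI : I ≠ ⊥)
    (huniq : ∀ J : Ideal R, J ≠ ⊥ → (∀ K : Ideal R, K ≤ J → K = ⊥ ∨ K = J) → J = I)
    (w : R → ℝ) (Γ : ℝ) (hw : IsLeftHomogeneousWeight w Γ) :
    w 0 = 0 ∧
    (∀ x ∈ I, x ≠ 0 → w x = Γ * (Nat.card I : ℝ) / ((Nat.card I : ℝ) - 1)) ∧
    (∀ x : R, x ∉ I → w x = Γ) := by
  have hleast : IsLeast {J : Ideal R | J ≠ ⊥} I :=
    ⟨hI, fun _ hJ => le_of_forall_isAtom_eq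
      (fun K hK => huniq K hK.1 fun L hL => hL.lt_or_eq.imp (hK.2 L) id) hJ⟩
  exact ⟨hw.1, fun _ hx hx0 => hw.apply_of_mem_of_isLeast hleast hx hx0,
    fun _ hx => hw.apply_of_notMem_of_isLeast hleast hx⟩

/-- Let `R` be a finite Frobenius ring with a unique minimal left ideal `I`. Any
homogeneous weight `w` on `R` with average value `Γ` satisfies `w 0 = 0`,
`w x = Γ * |I| / (|I| - 1)` for nonzero `x ∈ I`, and `w x = Γ` for `x ∉ I`. -/
theorem homWeight_of_unique_minimal_ideal (R : Type) [Ring R] [Fintype R]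
    (hR : IsFrobeniusRing R) (I : Ideal R) (hI : I ≠ ⊥)
    (hmin : ∀ J : Ideal R, J ≤ I → J = ⊥ ∨ J = I)
    (huniq : ∀ J : Ideal R, J ≠ ⊥ → (∀ K : Ideal R, K ≤ J → K = ⊥ ∨ K = J) → J = I)
    (w : R → ℝ) (Γ : ℝ) (hw : IsLeftHomogeneousWeight w Γ) :
    w 0 = 0 ∧
    (∀ x ∈ I, x ≠ 0 → w x = Γ * (Nat.card I : ℝ) / ((Nat.card I : ℝ) - 1)) ∧
    (∀ x : R, x ∉ I → w x = Γ) :=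
  homWeight_of_unique_minimal_ideal_general R I hI huniq w Γ hw
end

section
/- Let R be a finite ring and I a minimal left ideal of R. If w is a left homogeneous weight on R with average value Gamma, then w takes the common value Gamma * |I|/(|I|-1) on all nonzero elements of I. -/
/-! Every nonzero `x ∈ I` generates `I`, so `w` is constant, say `c`, on `I \ {0}` and the
average of `w` over `I = R x` is `Γ`. Since `w 0 = 0`, that average is `(|I| - 1) c / |I|`,
and `|I| ≥ 2` lets us solve for `c`. -/

theorem finsum_mem_eq_ncard_sdiff_singleton_nsmul {α M : Type*} [AddCommMonoid M]
    {s : Set α} (hs : s.Finite) {f : α → M} {a : α} {c : M} (ha : f a = 0)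
    (hc : ∀ y ∈ s, y ≠ a → f y = c) :
    ∑ᶠ y ∈ s, f y = (s \ {a}).ncard • c := by
  have hfin : (s \ {a}).Finite := hs.sdiff
  calc ∑ᶠ y ∈ s, f y = ∑ᶠ y ∈ insert a s, f y := (finsum_mem_insert_zero ha).symm
    _ = ∑ᶠ y ∈ s \ {a}, f y := by rw [← Set.insert_sdiff_singleton, finsum_mem_insert_zero ha]
    _ = ∑ᶠ _ ∈ s \ {a}, c := finsum_mem_congr rfl fun y hy ↦ hc y hy.1 hy.2
    _ = (s \ {a}).ncard • c := by
        rw [finsum_mem_eq_finite_toFinset_sum _ hfin, Finset.sum_const,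
          Set.ncard_eq_toFinset_card _ hfin]

theorem idealAvg_eq_of_eq_on_ne_zero {R : Type} [Ring R] [Finite R] {w : R → ℝ}
    {I : Ideal R} {c : ℝ} (h0 : w 0 = 0) (hc : ∀ y ∈ I, y ≠ 0 → w y = c) :
    idealAvg w I = ((Nat.card I : ℝ) - 1) * c / Nat.card I := by
  have hcard : (((I : Set R) \ {0}).ncard : ℝ) = Nat.card I - 1 := by
    rw [show Nat.card I = (I : Set R).ncard from rfl,
      ← Set.ncard_sdiff_singleton_add_one I.zero_mem (Set.toFinite _)]
    push_cast
    ring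
  rw [idealAvg, finsum_mem_eq_ncard_sdiff_singleton_nsmul (Set.toFinite _) h0 hc, nsmul_eq_mul,
    hcard]

theorem Ideal.span_singleton_eq_of_minimal {R : Type*} [Semiring R] {I : Ideal R}
    (hmin : ∀ J : Ideal R, J ≤ I → J = ⊥ ∨ J = I) {x : R} (hx : x ∈ I) (hx0 : x ≠ 0) :
    Ideal.span {x} = I :=
  (hmin _ ((Ideal.span_singleton_le_iff_mem I).mpr hx)).resolve_left
    (by rwa [Ideal.span_singleton_eq_bot])

theorem homWeight_on_minimal_ideal_general (R : Type) [Ring R] [Fintype R]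
    (I : Ideal R)
    (hmin : ∀ J : Ideal R, J ≤ I → J = ⊥ ∨ J = I)
    (w : R → ℝ) (Γ : ℝ) (hw : IsLeftHomogeneousWeight w Γ) :
    ∀ x ∈ I, x ≠ 0 → w x = Γ * (Nat.card I : ℝ) / ((Nat.card I : ℝ) - 1) := by
  obtain ⟨hw0, hwspan, hwavg⟩ := hw
  intro x hx hx0
  have hspan : ∀ y ∈ I, y ≠ 0 → Ideal.span {y} = I := fun _ ↦
    Ideal.span_singleton_eq_of_minimal hmin
  have hconst : ∀ y ∈ I, y ≠ 0 → w y = w x := fun y hy hy0 ↦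
    hwspan y x ((hspan y hy hy0).trans (hspan x hx hx0).symm)
  have havg : ((Nat.card I : ℝ) - 1) * w x / Nat.card I = Γ := by
    rw [← idealAvg_eq_of_eq_on_ne_zero hw0 hconst, ← hspan x hx hx0]
    exact hwavg x hx0
  have htwo : (2 : ℝ) ≤ Nat.card I := by
    have : Nontrivial I := nontrivial_of_ne ⟨0, I.zero_mem⟩ ⟨x, hx⟩ (by simpa [eq_comm] using hx0)
    exact_mod_cast Finite.one_lt_card
  rw [← havg]
  field_simp [show (Nat.card I : ℝ) - 1 ≠ 0 by linarith]

/-- If `I` is a minimal left ideal of a finite ring `R` and `w` is a left homogeneous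
weight on `R` with average value `Γ`, then `w` takes the common value
`Γ * |I| / (|I| - 1)` on all nonzero elements of `I`. -/
theorem homWeight_on_minimal_ideal (R : Type) [Ring R] [Fintype R]
    (I : Ideal R) (hI : I ≠ ⊥)
    (hmin : ∀ J : Ideal R, J ≤ I → J = ⊥ ∨ J = I)
    (w : R → ℝ) (Γ : ℝ) (hw : IsLeftHomogeneousWeight w Γ) :
    ∀ x ∈ I, x ≠ 0 → w x = Γ * (Nat.card I : ℝ) / ((Nat.card I : ℝ) - 1) :=
  homWeight_on_minimal_ideal_general R I hmin w Γ hw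
end

section
/- In the quaternion ring H(F_{2^m}) over the field with 2^m elements, the set x * F_{2^m} with x = 1 + i + j + k is a two-sided ideal equal to the two-sided ideal generated by x, it has exactly 2^m elements, and it is the unique minimal ideal of H(F_{2^m}) (it is contained in every nonzero ideal). -/
/-!
In characteristic 2 the relations of `ℍ[F]` read `i² = j² = 1`, `ij = ji = k`, so `ℍ[F]` is
the group algebra `F[C₂ × C₂]` and `ω = 1 + i + j + k` is the sum of the group elements. Hence
`ω q = q ω = ε(q) ω`, where `ε(q) = q.re + q.imI + q.imJ + q.imK` is the augmentation, and
`F ω` is a two-sided ideal. Conversely, writing `a = 1 + i`, `b = 1 + j` (so `a² = b² = 0`,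
`ab = ω`), every `q ≠ 0` is carried by one of `ω`, `b`, `a`, `1` to a nonzero multiple of `ω`,
so every nonzero ideal contains `ω`.
-/

open scoped Quaternion

namespace Quaternion

variable {R : Type*} [CommRing R]

-- `ℍ[R]` is a `def` over `ℍ[R,-1,0,-1]`, and `⟨a, b, c, d⟩` gets the latter type, so for
-- `q : ℍ[R]` the product `⟨a, b, c, d⟩ * q` does not elaborate.
def mk (a b c d : R) : ℍ[R] := ⟨a, b, c, d⟩

@[simp] lemma re_mk (a b c d : R) : (mk a b c d).re = a := rfl
@[simp] lemma imI_mk (a b c d : R) : (mk a b c d).imI = b := rfl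
@[simp] lemma imJ_mk (a b c d : R) : (mk a b c d).imJ = c := rfl
@[simp] lemma imK_mk (a b c d : R) : (mk a b c d).imK = d := rfl

def omega : ℍ[R] := mk 1 1 1 1

def augmentation (q : ℍ[R]) : R := q.re + q.imI + q.imJ + q.imK

lemma smul_omega_injective : Function.Injective (· • omega : R → ℍ[R]) :=
  fun a b h => by simpa [omega] using congrArg QuaternionAlgebra.re h

variable [CharP R 2]

lemma omega_mul (q : ℍ[R]) : omega * q = augmentation q • omega := by
  unfold augmentation
  simp only [Quaternion.ext_iff, omega, re_mul, imI_mul, imJ_mul, imK_mul, re_smul, imI_smul,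
    imJ_smul, imK_smul, re_mk, imI_mk, imJ_mk, imK_mk, smul_eq_mul]
  grind

lemma mul_omega (q : ℍ[R]) : q * omega = augmentation q • omega := by
  unfold augmentation
  simp only [Quaternion.ext_iff, omega, re_mul, imI_mul, imJ_mul, imK_mul, re_smul, imI_smul,
    imJ_smul, imK_smul, re_mk, imI_mk, imJ_mk, imK_mk, smul_eq_mul]
  grind

lemma mk_one_zero_one_zero_mul {q : ℍ[R]} (h : augmentation q = 0) :
    mk 1 0 1 0 * q = (q.imI + q.imK) • omega := by
  unfold augmentation at h
  simp only [Quaternion.ext_iff, omega, re_mul, imI_mul, imJ_mul, imK_mul, re_smul, imI_smul,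
    imJ_smul, imK_smul, re_mk, imI_mk, imJ_mk, imK_mk, smul_eq_mul]
  grind

lemma mk_one_one_zero_zero_mul {q : ℍ[R]} (h : augmentation q = 0) :
    mk 1 1 0 0 * q = (q.imJ + q.imK) • omega := by
  unfold augmentation at h
  simp only [Quaternion.ext_iff, omega, re_mul, imI_mul, imJ_mul, imK_mul, re_smul, imI_smul,
    imJ_smul, imK_smul, re_mk, imI_mk, imJ_mk, imK_mk, smul_eq_mul]
  grind

lemma eq_imK_smul_omega {q : ℍ[R]} (h : augmentation q = 0) (hIK : q.imI + q.imK = 0)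
    (hJK : q.imJ + q.imK = 0) : q = q.imK • omega := by
  unfold augmentation at h
  simp only [Quaternion.ext_iff, omega, re_smul, imI_smul, imJ_smul, imK_smul, re_mk, imI_mk,
    imJ_mk, imK_mk, smul_eq_mul]
  grind

lemma exists_mul_eq_smul_omega {q : ℍ[R]} (hq : q ≠ 0) :
    ∃ p : ℍ[R], ∃ c : R, c ≠ 0 ∧ p * q = c • omega := by
  obtain h | h := ne_or_eq (augmentation q) 0
  · exact ⟨omega, _, h, omega_mul q⟩
  obtain hIK | hIK := ne_or_eq (q.imI + q.imK) 0
  · exact ⟨mk 1 0 1 0, _, hIK, mk_one_zero_one_zero_mul h⟩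
  obtain hJK | hJK := ne_or_eq (q.imJ + q.imK) 0
  · exact ⟨mk 1 1 0 0, _, hJK, mk_one_one_zero_zero_mul h⟩
  have hq_eq := eq_imK_smul_omega h hIK hJK
  refine ⟨1, q.imK, fun hK => hq ?_, by rwa [one_mul]⟩
  rw [hq_eq, hK, zero_smul]

def omegaIdeal : TwoSidedIdeal ℍ[R] :=
  TwoSidedIdeal.mk' (Set.range (· • omega)) ⟨0, zero_smul R omega⟩
    (by rintro _ _ ⟨a, rfl⟩ ⟨b, rfl⟩; exact ⟨a + b, add_smul a b omega⟩)
    (by rintro _ ⟨a, rfl⟩; exact ⟨-a, neg_smul a omega⟩)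
    (by
      rintro x _ ⟨a, rfl⟩
      exact ⟨a * augmentation x, by rw [mul_smul_comm, mul_omega, smul_smul]⟩)
    (by
      rintro _ y ⟨a, rfl⟩
      exact ⟨a * augmentation y, by rw [smul_mul_assoc, omega_mul, smul_smul]⟩)

lemma mem_omegaIdeal {q : ℍ[R]} : q ∈ omegaIdeal ↔ ∃ c : R, c • omega = q :=
  TwoSidedIdeal.mem_mk' ..

lemma span_omega : TwoSidedIdeal.span {omega} = (omegaIdeal : TwoSidedIdeal ℍ[R]) := by
  refine le_antisymm (TwoSidedIdeal.span_le.2 ?_) fun q hq => ?_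
  · simpa using mem_omegaIdeal.2 ⟨1, one_smul R omega⟩
  · obtain ⟨c, rfl⟩ := mem_omegaIdeal.1 hq
    rw [Algebra.smul_def]
    exact TwoSidedIdeal.mul_mem_left _ _ _ (TwoSidedIdeal.subset_span rfl)

lemma coe_omegaIdeal :
    (omegaIdeal : TwoSidedIdeal ℍ[R]) = Set.range (· • omega : R → ℍ[R]) :=
  Set.ext fun _ => mem_omegaIdeal

lemma omega_mem_of_ne_bot {F : Type*} [Field F] [CharP F 2] {J : TwoSidedIdeal ℍ[F]}
    (hJ : J ≠ ⊥) : omega ∈ J := by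
  obtain ⟨q, hqJ, hq⟩ : ∃ q ∈ J, q ≠ 0 := by
    by_contra! h
    exact hJ (eq_bot_iff.2 fun q hq => (TwoSidedIdeal.mem_bot _).2 (h q hq))
  obtain ⟨p, c, hc, hpq⟩ := exists_mul_eq_smul_omega hq
  have : c⁻¹ • (p * q) ∈ J := by
    rw [Algebra.smul_def]
    exact J.mul_mem_left _ _ (J.mul_mem_left _ _ hqJ)
  rwa [hpq, smul_smul, inv_mul_cancel₀ hc, one_smul] at this

lemma omegaIdeal_le_of_ne_bot {F : Type*} [Field F] [CharP F 2] {J : TwoSidedIdeal ℍ[F]}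
    (hJ : J ≠ ⊥) : omegaIdeal ≤ J := by
  rw [← span_omega, TwoSidedIdeal.span_le, Set.singleton_subset_iff]
  exact omega_mem_of_ne_bot hJ

end Quaternion

open Quaternion

/-- In `H(F_{2^m})`, the set `x·F_{2^m}` with `x = 1 + i + j + k` equals the two-sided
ideal generated by `x`, has exactly `2^m` elements, and is the unique minimal ideal:
it is contained in every nonzero two-sided ideal. -/
theorem quaternion_char_two_minimal_ideal (m : ℕ) (hm : 0 < m) :
    ∀ (x : ℍ[GaloisField 2 m]), x = ⟨1, 1, 1, 1⟩ →
    ∀ (S : Set ℍ[GaloisField 2 m]),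
      S = {y | ∃ c : GaloisField 2 m, y = x * algebraMap (GaloisField 2 m) _ c} →
      (TwoSidedIdeal.span {x} : Set ℍ[GaloisField 2 m]) = S ∧
      Nat.card S = 2 ^ m ∧
      ∀ J : TwoSidedIdeal ℍ[GaloisField 2 m], J ≠ ⊥ → ∀ y ∈ S, y ∈ J := by
  intro x hx S hS
  obtain rfl : x = omega := hx
  replace hS : S = Set.range (· • omega : GaloisField 2 m → _) := by
    rw [hS]
    ext y
    simp only [Set.mem_ofPred_eq, Set.mem_range, ← Algebra.commutes, ← Algebra.smul_def,
      @eq_comm _ y]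
  subst hS
  refine ⟨(congrArg SetLike.coe span_omega).trans coe_omegaIdeal, ?_,
    fun J hJ y hy => omegaIdeal_le_of_ne_bot hJ (mem_omegaIdeal.2 hy)⟩
  rw [Nat.card_range_of_injective smul_omega_injective, GaloisField.card 2 m hm.ne']
end

section
/- In the quaternion ring H(Z_{2^r}) over the integers modulo 2^r with r > 1, the set {0, x} with x = 2^{r-1}(1 + i + j + k) is a two-sided ideal and is the unique minimal ideal of H(Z_{2^r}). -/
/-!
Let `c = 2^(r-1)`, the only nonzero element of `ℤ/2^r` killed by `2`, and `x = c(1 + i + j + k)`.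
Since `2c = 0`, signs in the multiplication table do not matter against `x`, so
`q x = x q = (q₀ + q₁ + q₂ + q₃) c (1 + i + j + k) ∈ {0, x}` and `{0, x}` is a two-sided ideal,
minimal because it has two elements. Conversely, a nonzero ideal `J` contains some `q ≠ 0`; as `2`
is nilpotent, some `y = 2^m q` is nonzero with `2y = 0`, so its coordinates lie in `{0, c}`, i.e.
`y = c e` for a nonzero quaternion `e` over `𝔽₂`. Over `𝔽₂` the quaternions form a commutative
local ring whose socle is spanned by `1 + i + j + k`, so some right multiple of `y` is `x`.
-/

open scoped Quaternion

theorem exists_pow_mul_ne_zero_and_pow_succ_mul_eq_zero {M : Type*} [MonoidWithZero M]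
    {a q : M} {n : ℕ} (hn : a ^ n * q = 0) (hq : q ≠ 0) :
    ∃ m, a ^ m * q ≠ 0 ∧ a ^ (m + 1) * q = 0 := by
  induction n with
  | zero => simp_all
  | succ n ih =>
    by_cases h : a ^ n * q = 0
    exacts [ih h, ⟨n, h, hn⟩]

theorem ZMod.add_self_eq_zero_iff_two_pow (n : ℕ) (u : ZMod (2 ^ (n + 1))) :
    u + u = 0 ↔ u = 0 ∨ u = 2 ^ n := by
  have h2n : (2 : ZMod (2 ^ (n + 1))) ^ n * 2 = 0 := by
    rw [← pow_succ]; exact_mod_cast ZMod.natCast_self (2 ^ (n + 1))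
  refine ⟨fun hu => ?_, ?_⟩
  · have hdvd : 2 ^ (n + 1) ∣ 2 * u.val := by
      rw [← ZMod.natCast_eq_zero_iff]; push_cast [ZMod.natCast_val, ZMod.cast_id]
      linear_combination hu
    obtain ⟨k, hk⟩ : 2 ^ n ∣ u.val :=
      Nat.dvd_of_mul_dvd_mul_left two_pos (by rwa [← pow_succ'])
    have hk2 : k < 2 := by
      have := ZMod.val_lt u
      rw [hk, pow_succ] at this
      exact Nat.lt_of_mul_lt_mul_left this
    rw [← ZMod.natCast_zmod_val u, hk]
    interval_cases k <;> simp
  · rintro (rfl | rfl)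
    exacts [add_zero 0, by linear_combination h2n]

theorem ZMod.two_pow_ne_zero (n : ℕ) : (2 : ZMod (2 ^ (n + 1))) ^ n ≠ 0 := by
  have : ((2 ^ n : ℕ) : ZMod (2 ^ (n + 1))) ≠ 0 := by
    rw [Ne, ZMod.natCast_eq_zero_iff, Nat.pow_dvd_pow_iff_le_right one_lt_two]
    omega
  exact_mod_cast this

theorem ZMod.isNilpotent_two (n : ℕ) : IsNilpotent (2 : ZMod (2 ^ n)) :=
  ⟨n, by exact_mod_cast ZMod.natCast_self (2 ^ n)⟩

namespace TwoSidedIdeal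

variable {A : Type*} [Ring A] {x : A} {I J : TwoSidedIdeal A}

theorem exists_coe_eq_pair (hl : ∀ q, q * x = 0 ∨ q * x = x)
    (hr : ∀ q, x * q = 0 ∨ x * q = x) : ∃ I : TwoSidedIdeal A, (I : Set A) = {0, x} := by
  have hneg : -x = 0 ∨ -x = x := by simpa using hl (-1)
  have hx : x + x = 0 := by
    rcases hneg with h | h
    · rw [neg_eq_zero.1 h, add_zero]
    · simpa [h] using add_neg_cancel x
  refine ⟨mk' {0, x} (Or.inl rfl) ?_ ?_ ?_ ?_, coe_mk' ..⟩
  · rintro a b (rfl | rfl) (rfl | rfl) <;> simp [hx]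
  · rintro a (rfl | rfl)
    exacts [Or.inl neg_zero, hneg]
  · rintro a b (rfl | rfl)
    exacts [Or.inl (mul_zero a), hl a]
  · rintro a b (rfl | rfl)
    exacts [Or.inl (zero_mul b), hr b]

theorem le_of_coe_eq_pair (hI : (I : Set A) = {0, x}) (hx : x ∈ J) : I ≤ J := by
  rintro y hy
  rcases (show y ∈ ({0, x} : Set A) from hI ▸ hy) with rfl | rfl
  exacts [J.zero_mem, hx]

theorem eq_bot_or_eq_of_le_of_coe_eq_pair (hI : (I : Set A) = {0, x}) (hJ : J ≤ I) :
    J = ⊥ ∨ J = I := by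
  by_cases hx : x ∈ J
  · exact Or.inr (le_antisymm hJ (le_of_coe_eq_pair hI hx))
  · refine Or.inl (eq_bot_iff.2 fun y hy => ?_)
    rcases (show y ∈ ({0, x} : Set A) from hI ▸ hJ hy) with rfl | rfl
    exacts [(mem_bot A).2 rfl, absurd hy hx]

theorem ne_bot_of_coe_eq_pair (hI : (I : Set A) = {0, x}) (hx : x ≠ 0) : I ≠ ⊥ := by
  rintro rfl
  exact hx ((mem_bot A).1 (show x ∈ ((⊥ : TwoSidedIdeal A) : Set A) from hI ▸ Or.inr rfl))

theorem exists_mem_ne_zero_of_ne_bot (hJ : J ≠ ⊥) : ∃ y ∈ J, y ≠ 0 := by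
  by_contra! h
  exact hJ (eq_bot_iff.2 fun y hy => (mem_bot A).2 (h y hy))

end TwoSidedIdeal

namespace Quaternion

variable {R : Type*} [CommRing R]

-- An anonymous constructor in `ℍ[R]` elaborates with type `ℍ[R,-1,0,-1]`, which blocks the
-- `ℍ[R]` simp lemmas such as `Quaternion.re_mul`; these two lemmas bridge the gap.
theorem mul_mk (q : ℍ[R]) (a b c d : R) :
    (q * ⟨a, b, c, d⟩ : ℍ[R]) = ⟨q.re * a - q.imI * b - q.imJ * c - q.imK * d,
      q.re * b + q.imI * a + q.imJ * d - q.imK * c,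
      q.re * c - q.imI * d + q.imJ * a + q.imK * b,
      q.re * d + q.imI * c - q.imJ * b + q.imK * a⟩ :=
  Quaternion.ext _ _ (re_mul q ⟨a, b, c, d⟩) (imI_mul q ⟨a, b, c, d⟩)
    (imJ_mul q ⟨a, b, c, d⟩) (imK_mul q ⟨a, b, c, d⟩)

theorem mk_mul (q : ℍ[R]) (a b c d : R) :
    (⟨a, b, c, d⟩ * q : ℍ[R]) = ⟨a * q.re - b * q.imI - c * q.imJ - d * q.imK,
      a * q.imI + b * q.re + c * q.imK - d * q.imJ,
      a * q.imJ - b * q.imK + c * q.re + d * q.imI,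
      a * q.imK + b * q.imJ - c * q.imI + d * q.re⟩ :=
  Quaternion.ext _ _ (re_mul ⟨a, b, c, d⟩ q) (imI_mul ⟨a, b, c, d⟩ q)
    (imJ_mul ⟨a, b, c, d⟩ q) (imK_mul ⟨a, b, c, d⟩ q)

variable {c : R}

theorem mul_mk_const (hc2 : c + c = 0) (q : ℍ[R]) :
    q * ⟨c, c, c, c⟩ = ⟨(q.re + q.imI + q.imJ + q.imK) * c, (q.re + q.imI + q.imJ + q.imK) * c,
      (q.re + q.imI + q.imJ + q.imK) * c, (q.re + q.imI + q.imJ + q.imK) * c⟩ := by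
  rw [mul_mk]
  ext <;> dsimp only
  · linear_combination (-q.imI - q.imJ - q.imK) * hc2
  · linear_combination (-q.imK) * hc2
  · linear_combination (-q.imI) * hc2
  · linear_combination (-q.imJ) * hc2

theorem mk_const_mul (hc2 : c + c = 0) (q : ℍ[R]) :
    ⟨c, c, c, c⟩ * q = ⟨(q.re + q.imI + q.imJ + q.imK) * c, (q.re + q.imI + q.imJ + q.imK) * c,
      (q.re + q.imI + q.imJ + q.imK) * c, (q.re + q.imI + q.imJ + q.imK) * c⟩ := by
  rw [mk_mul]
  ext <;> dsimp only
  · linear_combination (-q.imI - q.imJ - q.imK) * hc2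
  · linear_combination (-q.imJ) * hc2
  · linear_combination (-q.imK) * hc2
  · linear_combination (-q.imI) * hc2

theorem exists_mul_eq_mk_const (hc2 : c + c = 0) {y : ℍ[R]}
    (hre : y.re = 0 ∨ y.re = c) (hi : y.imI = 0 ∨ y.imI = c)
    (hj : y.imJ = 0 ∨ y.imJ = c) (hk : y.imK = 0 ∨ y.imK = c) (hy : y ≠ 0) :
    ∃ z : ℍ[R], y * z = ⟨c, c, c, c⟩ := by
  -- Over `𝔽₂`, one of `1 + i + j + k`, `1 + i`, `1 + j`, `1` carries each nonzero quaternion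
  -- onto `1 + i + j + k`.
  rcases hre with hre | hre <;> rcases hi with hi | hi <;> rcases hj with hj | hj <;>
    rcases hk with hk | hk
  · exact absurd (Quaternion.ext _ _ hre hi hj hk) hy
  all_goals first
    | (refine ⟨⟨1, 1, 1, 1⟩, ?_⟩; rw [mul_mk]; ext <;> simp [hre, hi, hj, hk] <;> grind)
    | (refine ⟨⟨1, 1, 0, 0⟩, ?_⟩; rw [mul_mk]; ext <;> simp [hre, hi, hj, hk] <;> grind)
    | (refine ⟨⟨1, 0, 1, 0⟩, ?_⟩; rw [mul_mk]; ext <;> simp [hre, hi, hj, hk] <;> grind)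
    | (refine ⟨1, ?_⟩; ext <;> simp [hre, hi, hj, hk])

theorem mk_mul_const_eq_zero_or_eq (hc : ∀ u : R, u + u = 0 ↔ u = 0 ∨ u = c) (s : R) :
    (⟨s * c, s * c, s * c, s * c⟩ : ℍ[R]) = 0 ∨
      (⟨s * c, s * c, s * c, s * c⟩ : ℍ[R]) = ⟨c, c, c, c⟩ := by
  have hsc : s * c + s * c = 0 := by rw [← mul_add, (hc c).2 (Or.inr rfl), mul_zero]
  rcases (hc _).1 hsc with h | h <;> rw [h]
  exacts [Or.inl rfl, Or.inr rfl]

theorem mul_mk_const_eq_zero_or_eq (hc : ∀ u : R, u + u = 0 ↔ u = 0 ∨ u = c) (q : ℍ[R]) :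
    q * ⟨c, c, c, c⟩ = 0 ∨ q * ⟨c, c, c, c⟩ = ⟨c, c, c, c⟩ := by
  rw [mul_mk_const ((hc c).2 (Or.inr rfl))]
  exact mk_mul_const_eq_zero_or_eq hc _

theorem mk_const_mul_eq_zero_or_eq (hc : ∀ u : R, u + u = 0 ↔ u = 0 ∨ u = c) (q : ℍ[R]) :
    ⟨c, c, c, c⟩ * q = 0 ∨ ⟨c, c, c, c⟩ * q = ⟨c, c, c, c⟩ := by
  rw [mk_const_mul ((hc c).2 (Or.inr rfl))]
  exact mk_mul_const_eq_zero_or_eq hc _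

theorem exists_mul_eq_mk_const_of_add_self (hc : ∀ u : R, u + u = 0 ↔ u = 0 ∨ u = c)
    {y : ℍ[R]} (hy : y + y = 0) (hy0 : y ≠ 0) : ∃ z : ℍ[R], y * z = ⟨c, c, c, c⟩ :=
  exists_mul_eq_mk_const ((hc c).2 (Or.inr rfl))
    ((hc _).1 (congrArg QuaternionAlgebra.re hy)) ((hc _).1 (congrArg QuaternionAlgebra.imI hy))
    ((hc _).1 (congrArg QuaternionAlgebra.imJ hy)) ((hc _).1 (congrArg QuaternionAlgebra.imK hy))
    hy0

theorem mk_const_mem_of_ne_bot (hc : ∀ u : R, u + u = 0 ↔ u = 0 ∨ u = c)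
    (h2 : IsNilpotent (2 : R)) {J : TwoSidedIdeal ℍ[R]} (hJ : J ≠ ⊥) : ⟨c, c, c, c⟩ ∈ J := by
  obtain ⟨q, hqJ, hq⟩ := J.exists_mem_ne_zero_of_ne_bot hJ
  obtain ⟨n, hn⟩ : IsNilpotent (2 : ℍ[R]) := map_ofNat (algebraMap R ℍ[R]) 2 ▸ h2.map _
  obtain ⟨m, hm, hm1⟩ := exists_pow_mul_ne_zero_and_pow_succ_mul_eq_zero
    (by rw [hn, zero_mul] : (2 : ℍ[R]) ^ n * q = 0) hq
  obtain ⟨z, hz⟩ := exists_mul_eq_mk_const_of_add_self hc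
    (by rwa [← two_mul, ← mul_assoc, ← pow_succ'] : 2 ^ m * q + 2 ^ m * q = 0) hm
  exact hz ▸ J.mul_mem_right _ _ (J.mul_mem_left _ _ hqJ)

end Quaternion

/-- In the quaternion ring `H(Z_{2^r})` with `r > 1`, the set `{0, x}` with
`x = 2^{r-1}(1 + i + j + k)` is a two-sided ideal and is the unique minimal ideal:
it is minimal, and every nonzero two-sided ideal contains it. -/
theorem quaternion_zmod_two_pow_minimal_ideal (r : ℕ) (hr : 1 < r) :
    ∀ x : ℍ[ZMod (2 ^ r)],
      x = algebraMap (ZMod (2 ^ r)) _ (2 ^ (r - 1)) * ⟨1, 1, 1, 1⟩ →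
      ∃ I : TwoSidedIdeal ℍ[ZMod (2 ^ r)],
        (I : Set ℍ[ZMod (2 ^ r)]) = {0, x} ∧ I ≠ ⊥ ∧
        (∀ J : TwoSidedIdeal ℍ[ZMod (2 ^ r)], J ≤ I → J = ⊥ ∨ J = I) ∧
        (∀ J : TwoSidedIdeal ℍ[ZMod (2 ^ r)], J ≠ ⊥ → I ≤ J) := by
  intro x hx
  obtain ⟨n, rfl⟩ : ∃ n, r = n + 1 := ⟨r - 1, by omega⟩
  have hc := ZMod.add_self_eq_zero_iff_two_pow n
  obtain rfl : x = ⟨2 ^ n, 2 ^ n, 2 ^ n, 2 ^ n⟩ := by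
    rw [hx, Quaternion.mul_mk]; ext <;> simp [-Quaternion.coe_pow]
  obtain ⟨I, hI⟩ := TwoSidedIdeal.exists_coe_eq_pair
    (Quaternion.mul_mk_const_eq_zero_or_eq hc) (Quaternion.mk_const_mul_eq_zero_or_eq hc)
  refine ⟨I, hI, TwoSidedIdeal.ne_bot_of_coe_eq_pair hI fun h => ?_,
    fun J => TwoSidedIdeal.eq_bot_or_eq_of_le_of_coe_eq_pair hI, fun J hJ => ?_⟩
  · exact ZMod.two_pow_ne_zero n (congrArg QuaternionAlgebra.re h)
  · exact TwoSidedIdeal.le_of_coe_eq_pair hI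
      (Quaternion.mk_const_mem_of_ne_bot hc (ZMod.isNilpotent_two _) hJ)
end

section
/- Let R = GR(p^r, m), let H be a quaternion ring over R, let B be a left H-linear block code of length n with minimum Hamming distance d, and let tau(B) be its image in R^{4n} under the coordinate map tau(x_0 + x_1 i + x_2 j + x_3 k) = (x_0, x_1, x_2, x_3). If delta is the minimum homogeneous distance of tau(B) with respect to the homogeneous weight with average value Gamma = (p^m-1)p^{m(r-2)}, then Gamma * d <= delta <= p^{m(r-1)} * 4d. -/
open scoped Quaternion

/-- The Galois ring `GR(p^r, m)`, realized as `Z_{p^r}[X]/(h)` for a monic degree-`m`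
polynomial `h` whose mod-`p` reduction is irreducible. -/
abbrev GaloisRing (p r : ℕ) (h : Polynomial (ZMod (p ^ r))) : Type :=
  Polynomial (ZMod (p ^ r)) ⧸ Ideal.span {h}

open scoped Classical in
/-- The homogeneous weight on the Galois ring `GR(p^r, m)`: it takes the value
`p^{m(r-1)}` on nonzero elements of the minimal ideal `(p^{r-1})` and the value
`Γ = (p^m - 1) p^{m(r-2)}` on all other nonzero elements. -/
noncomputable def homWt (p r m : ℕ) (h : Polynomial (ZMod (p ^ r)))
    (x : GaloisRing p r h) : ℝ :=
  if x = 0 then 0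
  else if x ∈ (Ideal.span {(p : GaloisRing p r h) ^ (r - 1)} : Ideal (GaloisRing p r h))
    then (p : ℝ) ^ ((m : ℤ) * ((r : ℤ) - 1))
  else ((p : ℝ) ^ m - 1) * (p : ℝ) ^ ((m : ℤ) * ((r : ℤ) - 2))

/-!
Every nonzero element of `GR(p^r, m)` has homogeneous weight between `Γ` and `p^{m(r-1)}`.
A nonzero quaternion has a nonzero coordinate and at most four, so its `τ`-weight lies between
`Γ` and `4 p^{m(r-1)}`. Summing over the support of a codeword bounds its homogeneous weight
by `Γ` and `4 p^{m(r-1)}` times its Hamming weight; comparing a codeword of least Hamming weight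
and one of least homogeneous weight gives the two inequalities.
-/

structure WeightBetween {M : Type*} [Zero M] (w : M → ℝ) (Γ C : ℝ) : Prop where
  map_zero : w 0 = 0
  lower_nonneg : 0 ≤ Γ
  lower : ∀ x, x ≠ 0 → Γ ≤ w x
  upper : ∀ x, w x ≤ C

namespace WeightBetween

variable {M : Type*} [Zero M] {w : M → ℝ} {Γ C : ℝ}

theorem nonneg (hw : WeightBetween w Γ C) (x : M) : 0 ≤ w x := by
  by_cases hx : x = 0
  · rw [hx, hw.map_zero]
  · exact hw.lower_nonneg.trans (hw.lower x hx)

section Support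

variable {ι : Type*} [Fintype ι]

theorem sum_eq_sum_support (hw : WeightBetween w Γ C) (c : ι → M) [DecidablePred (c · ≠ 0)] :
    ∑ t, w (c t) = ∑ t with c t ≠ 0, w (c t) :=
  (Finset.sum_filter_of_ne (p := (c · ≠ 0)) fun _ _ hne hct =>
    hne (by rw [hct, hw.map_zero])).symm

theorem mul_card_support_le_sum (hw : WeightBetween w Γ C) (c : ι → M) :
    Γ * Nat.card {t // c t ≠ 0} ≤ ∑ t, w (c t) := by
  classical
  rw [hw.sum_eq_sum_support, Nat.subtype_card _ Finset.mem_filter_univ, mul_comm,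
    ← nsmul_eq_mul]
  exact Finset.card_nsmul_le_sum _ _ _ fun t ht => hw.lower _ (Finset.mem_filter.mp ht).2

theorem sum_le_mul_card_support (hw : WeightBetween w Γ C) (c : ι → M) :
    ∑ t, w (c t) ≤ C * Nat.card {t // c t ≠ 0} := by
  classical
  rw [hw.sum_eq_sum_support, Nat.subtype_card _ Finset.mem_filter_univ, mul_comm,
    ← nsmul_eq_mul]
  exact Finset.sum_le_card_nsmul _ _ _ fun t _ => hw.upper _

theorem minWeight_bounds (hw : WeightBetween w Γ C) {A : Type*} [SetLike A (ι → M)] {S : A}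
    {d : ℕ} {δ : ℝ}
    (hd : IsLeast {k : ℕ | ∃ c ∈ S, c ≠ 0 ∧ k = Nat.card {t // c t ≠ 0}} d)
    (hδ : IsLeast {x : ℝ | ∃ c ∈ S, c ≠ 0 ∧ x = ∑ t, w (c t)} δ) :
    Γ * d ≤ δ ∧ δ ≤ C * d := by
  obtain ⟨⟨c, hcS, hc0, rfl⟩, hd_min⟩ := hd
  obtain ⟨⟨e, heS, he0, rfl⟩, hδ_min⟩ := hδ
  constructor
  · calc Γ * Nat.card {t // c t ≠ 0}
        ≤ Γ * Nat.card {t // e t ≠ 0} := by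
          gcongr
          · exact hw.lower_nonneg
          · exact hd_min ⟨e, heS, he0, rfl⟩
      _ ≤ ∑ t, w (e t) := hw.mul_card_support_le_sum e
  · exact (hδ_min ⟨c, hcS, hc0, rfl⟩).trans (hw.sum_le_mul_card_support c)

end Support

end WeightBetween

section Quaternion

variable {R : Type*} [Zero R] {c₁ c₂ c₃ : R}

/-- The weight of `τ(q) = (q₀, q₁, q₂, q₃)` as a word over `R`. -/
def quaternionWeight (w : R → ℝ) (q : ℍ[R, c₁, c₂, c₃]) : ℝ :=
  w q.re + w q.imI + w q.imJ + w q.imK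

theorem WeightBetween.quaternionWeight {w : R → ℝ} {Γ C : ℝ} (hw : WeightBetween w Γ C) :
    WeightBetween (quaternionWeight w : ℍ[R, c₁, c₂, c₃] → ℝ) Γ (4 * C) where
  map_zero := show w 0 + w 0 + w 0 + w 0 = 0 by simp only [hw.map_zero, add_zero]
  lower_nonneg := hw.lower_nonneg
  lower q hq := by
    have h₀ := hw.nonneg q.re
    have h₁ := hw.nonneg q.imI
    have h₂ := hw.nonneg q.imJ
    have h₃ := hw.nonneg q.imK
    have hcoord : q.re ≠ 0 ∨ q.imI ≠ 0 ∨ q.imJ ≠ 0 ∨ q.imK ≠ 0 := by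
      contrapose! hq
      exact QuaternionAlgebra.ext hq.1 hq.2.1 hq.2.2.1 hq.2.2.2
    unfold _root_.quaternionWeight
    rcases hcoord with hx | hx | hx | hx <;> linarith [hw.lower _ hx]
  upper q := by
    unfold _root_.quaternionWeight
    linarith [hw.upper q.re, hw.upper q.imI, hw.upper q.imJ, hw.upper q.imK]

end Quaternion

theorem homWt_avg_le_max {p : ℕ} (hp : 0 < p) (r m : ℕ) :
    ((p : ℝ) ^ m - 1) * (p : ℝ) ^ ((m : ℤ) * ((r : ℤ) - 2)) ≤
      (p : ℝ) ^ ((m : ℤ) * ((r : ℤ) - 1)) :=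
  have hp' : (0 : ℝ) < p := by exact_mod_cast hp
  calc ((p : ℝ) ^ m - 1) * (p : ℝ) ^ ((m : ℤ) * ((r : ℤ) - 2))
      ≤ (p : ℝ) ^ m * (p : ℝ) ^ ((m : ℤ) * ((r : ℤ) - 2)) := by gcongr; linarith
    _ = (p : ℝ) ^ ((m : ℤ) * ((r : ℤ) - 1)) := by
      rw [← zpow_natCast, ← zpow_add₀ hp'.ne']
      ring_nf

theorem weightBetween_homWt {p : ℕ} (hp : 0 < p) (r m : ℕ) (h : Polynomial (ZMod (p ^ r))) :
    WeightBetween (homWt p r m h) (((p : ℝ) ^ m - 1) * (p : ℝ) ^ ((m : ℤ) * ((r : ℤ) - 2)))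
      ((p : ℝ) ^ ((m : ℤ) * ((r : ℤ) - 1))) where
  map_zero := if_pos rfl
  lower_nonneg := by
    have : (1 : ℝ) ≤ (p : ℝ) ^ m := one_le_pow₀ (by exact_mod_cast hp)
    have : (0 : ℝ) < p := by exact_mod_cast hp
    positivity
  lower x hx := by
    unfold homWt
    rw [if_neg hx]
    split_ifs
    · exact homWt_avg_le_max hp r m
    · exact le_rfl
  upper x := by
    have : (0 : ℝ) < p := by exact_mod_cast hp
    unfold homWt
    split_ifs
    · positivity
    · exact le_rfl
    · exact homWt_avg_le_max hp r m

theorem homDistance_bounds_general (p r m : ℕ) [Fact p.Prime]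
    (h : Polynomial (ZMod (p ^ r)))
    (a b : (GaloisRing p r h)ˣ) (n : ℕ)
    (B : Submodule ℍ[GaloisRing p r h, (a : GaloisRing p r h), (b : GaloisRing p r h)]
      (Fin n → ℍ[GaloisRing p r h, (a : GaloisRing p r h), (b : GaloisRing p r h)]))
    (d : ℕ) (δ : ℝ)
    (hd : IsLeast {k : ℕ | ∃ c ∈ B, c ≠ 0 ∧ k = Nat.card {t : Fin n // c t ≠ 0}} d)
    (hδ : IsLeast {x : ℝ | ∃ c ∈ B, c ≠ 0 ∧ x = ∑ t : Fin n,
        (homWt p r m h (c t).re + homWt p r m h (c t).imI +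
          homWt p r m h (c t).imJ + homWt p r m h (c t).imK)} δ) :
    ((p : ℝ) ^ m - 1) * (p : ℝ) ^ ((m : ℤ) * ((r : ℤ) - 2)) * d ≤ δ ∧
      δ ≤ (p : ℝ) ^ ((m : ℤ) * ((r : ℤ) - 1)) * (4 * d) := by
  rw [← mul_assoc, mul_comm _ (4 : ℝ)]
  exact (weightBetween_homWt (Fact.out : p.Prime).pos r m h).quaternionWeight.minWeight_bounds
    hd hδ

/-- Let `B` be a left linear block code of length `n` over a quaternion ring `H` over
`R = GR(p^r, m)` with minimum Hamming distance `d`, and let `δ` be the minimum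
homogeneous distance of the image code `τ(B) ⊆ R^{4n}` (where
`τ(x₀ + x₁i + x₂j + x₃k) = (x₀, x₁, x₂, x₃)` coordinate-wise) with respect to the
homogeneous weight with average value `Γ = (p^m - 1) p^{m(r-2)}`. Then
`Γ d ≤ δ ≤ p^{m(r-1)} · 4d`. -/
theorem homDistance_bounds (p r m : ℕ) [Fact p.Prime] (hr : 0 < r) (hm : 0 < m)
    (h : Polynomial (ZMod (p ^ r))) (hmonic : h.Monic) (hdeg : h.natDegree = m)
    (hirr : Irreducible (h.map (ZMod.castHom (dvd_pow_self p hr.ne') (ZMod p))))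
    (a b : (GaloisRing p r h)ˣ) (n : ℕ)
    (B : Submodule ℍ[GaloisRing p r h, (a : GaloisRing p r h), (b : GaloisRing p r h)]
      (Fin n → ℍ[GaloisRing p r h, (a : GaloisRing p r h), (b : GaloisRing p r h)]))
    (d : ℕ) (δ : ℝ)
    (hd : IsLeast {k : ℕ | ∃ c ∈ B, c ≠ 0 ∧ k = Nat.card {t : Fin n // c t ≠ 0}} d)
    (hδ : IsLeast {x : ℝ | ∃ c ∈ B, c ≠ 0 ∧ x = ∑ t : Fin n,
        (homWt p r m h (c t).re + homWt p r m h (c t).imI +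
          homWt p r m h (c t).imJ + homWt p r m h (c t).imK)} δ) :
    ((p : ℝ) ^ m - 1) * (p : ℝ) ^ ((m : ℤ) * ((r : ℤ) - 2)) * d ≤ δ ∧
      δ ≤ (p : ℝ) ^ ((m : ℤ) * ((r : ℤ) - 1)) * (4 * d) :=
  homDistance_bounds_general p r m h a b n B d δ hd hδ
end
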